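/- arXiv:2504.14127 — 2 statements merged into one kernel-verified Lean document; each statement's English description precedes it below -/
import Mathlib

section
/- Let N ≥ 2, let 0 < N₁ < N, and let Y(1), Y(0) ∈ [y_min, y_max]^N be potential outcome vectors with y_min < y_max. Given a treatment vector X ∈ {0,1}^N with ∑ᵢ Xᵢ = N₁, define the observed means Ȳ_x = (1/N_x) ∑ᵢ Yᵢ(x) 𝟙(Xᵢ = x) for x ∈ {0,1}, where Yᵢ = Yᵢ(Xᵢ) and N₀ = N − N₁. Under the K-approximate mean balance assumption |(1/N₁)∑ᵢ Yᵢ(x)𝟙(Xᵢ=1) − (1/N₀)∑ᵢ Yᵢ(x)𝟙(Xᵢ=0)| ≤ K for each x ∈ {0,1}, the mean of Y(x) over the whole population, (1/N)∑ᵢ Yᵢ(x), lies in the interval [LB_K(x), UB_K(x)], where LB_K(x) = Ȳ_x·(N_x/N) + max{y_min, Ȳ_x − K}·(N_{1−x}/N) and UB_K(x) = Ȳ_x·(N_x/N) + min{y_max, Ȳ_x + K}·(N_{1−x}/N). -/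
open Finset

/-- The group of units with treatment status `b`. -/
def grp (N : ℕ) (X : Fin N → Bool) (b : Bool) : Finset (Fin N) :=
  Finset.univ.filter (fun i => X i = b)

/-- Mean of `A` over the group with treatment status `b`. -/
noncomputable def gmean (N : ℕ) (X : Fin N → Bool) (b : Bool) (A : Fin N → ℝ) : ℝ :=
  (∑ i ∈ grp N X b, A i) / ((grp N X b).card : ℝ)

lemma grp_card_add (N : ℕ) (X : Fin N → Bool) (b : Bool) :
    (grp N X b).card + (grp N X (!b)).card = N := by
  have := Finset.card_filter_add_card_filter_not
    (s := (Finset.univ : Finset (Fin N))) (p := fun i => X i = b)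
  simp only [Finset.card_univ, Fintype.card_fin] at this
  have heq : Finset.univ.filter (fun a => ¬X a = b) = Finset.univ.filter (fun i => X i = !b) := by
    apply Finset.filter_congr
    intro i _
    cases b <;> cases X i <;> simp
  rw [heq] at this
  rw [grp, grp, this]

lemma sum_split (N : ℕ) (X : Fin N → Bool) (b : Bool) (f : Fin N → ℝ) :
    ∑ i, f i = ∑ i ∈ grp N X b, f i + ∑ i ∈ grp N X (!b), f i := by
  have := Finset.sum_filter_add_sum_filter_not (Finset.univ : Finset (Fin N))
    (fun i => X i = b) f
  rw [grp, grp, ← this]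
  congr 1
  apply Finset.sum_congr _ (fun _ _ => rfl)
  apply Finset.filter_congr
  intro i _
  cases b <;> cases X i <;> simp

/-- bounds on the population mean of each potential outcome
under `K`-approximate mean balance. -/
theorem statement0
    (N N₁ : ℕ) (hN : 2 ≤ N)
    (ymin ymax : ℝ) (hy : ymin < ymax)
    (Y : Bool → Fin N → ℝ)
    (X : Fin N → Bool)
    (hN₁ : (grp N X true).card = N₁) (hN₁pos : 0 < N₁) (hN₁lt : N₁ < N)
    (hbdd : ∀ (b : Bool) (i : Fin N), Y b i ∈ Set.Icc ymin ymax)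
    (K : ℝ) (hK : 0 ≤ K)
    (hbal : ∀ b : Bool,
      |gmean N X true (Y b) - gmean N X false (Y b)| ≤ K) :
    ∀ b : Bool,
      gmean N X b (Y b) * ((grp N X b).card : ℝ) / N
          + max ymin (gmean N X b (Y b) - K) * ((grp N X (!b)).card : ℝ) / N
        ≤ (∑ i, Y b i) / N
      ∧ (∑ i, Y b i) / N
        ≤ gmean N X b (Y b) * ((grp N X b).card : ℝ) / N
          + min ymax (gmean N X b (Y b) + K) * ((grp N X (!b)).card : ℝ) / N := by
  intro b
  have hNpos : (0:ℝ) < N := by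
    have : 0 < N := by omega
    exact_mod_cast this
  -- cards are positive
  have hct : 0 < (grp N X true).card := hN₁ ▸ hN₁pos
  have hcf : 0 < (grp N X false).card := by
    have := grp_card_add N X true
    simp only [Bool.not_true] at this
    omega
  have hcb : 0 < (grp N X b).card := by cases b <;> assumption
  have hcnb : 0 < (grp N X (!b)).card := by cases b <;> simp only [Bool.not_true, Bool.not_false] <;> assumption
  have hcbR : (0:ℝ) < ((grp N X b).card : ℝ) := by exact_mod_cast hcb
  have hcnbR : (0:ℝ) < ((grp N X (!b)).card : ℝ) := by exact_mod_cast hcnb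
  set m := gmean N X b (Y b) with hm
  set m' := gmean N X (!b) (Y b) with hm'
  -- sum over each group equals mean times card
  have hsb : ∑ i ∈ grp N X b, Y b i = m * ((grp N X b).card : ℝ) := by
    rw [hm, gmean]; field_simp
  have hsnb : ∑ i ∈ grp N X (!b), Y b i = m' * ((grp N X (!b)).card : ℝ) := by
    rw [hm', gmean]; field_simp
  -- m' within [ymin, ymax]
  have hm'lb : ymin ≤ m' := by
    rw [hm', gmean, le_div_iff₀ hcnbR]
    calc ymin * ((grp N X (!b)).card : ℝ) = ∑ _i ∈ grp N X (!b), ymin := by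
          rw [Finset.sum_const, nsmul_eq_mul, mul_comm]
      _ ≤ ∑ i ∈ grp N X (!b), Y b i :=
          Finset.sum_le_sum fun i _ => (hbdd b i).1
  have hm'ub : m' ≤ ymax := by
    rw [hm', gmean, div_le_iff₀ hcnbR]
    calc ∑ i ∈ grp N X (!b), Y b i ≤ ∑ _i ∈ grp N X (!b), ymax :=
          Finset.sum_le_sum fun i _ => (hbdd b i).2
      _ = ymax * ((grp N X (!b)).card : ℝ) := by
          rw [Finset.sum_const, nsmul_eq_mul, mul_comm]
  -- balance
  have hbal' : |m - m'| ≤ K := by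
    cases b
    · simpa [hm, hm', abs_sub_comm] using hbal false
    · simpa [hm, hm'] using hbal true
  have hKlb : m - K ≤ m' := by
    have := (abs_le.mp hbal').2
    linarith
  have hKub : m' ≤ m + K := by
    have := (abs_le.mp hbal').1
    linarith
  have hlb : max ymin (m - K) ≤ m' := max_le hm'lb hKlb
  have hub : m' ≤ min ymax (m + K) := le_min hm'ub hKub
  have htot : ∑ i, Y b i = m * ((grp N X b).card : ℝ) + m' * ((grp N X (!b)).card : ℝ) := by
    rw [sum_split N X b (Y b), hsb, hsnb]
  constructor
  · rw [htot, ← add_div, div_le_div_iff_of_pos_right hNpos]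
    have := mul_le_mul_of_nonneg_right hlb (le_of_lt hcnbR)
    linarith
  · rw [htot, ← add_div, div_le_div_iff_of_pos_right hNpos]
    have := mul_le_mul_of_nonneg_right hub (le_of_lt hcnbR)
    linarith
end

section
/- In the setting of the previous bounds, every value in the interval [LB_K(x), UB_K(x)] is attained: for any θ in that interval, there exist completions of the unobserved potential outcomes Yᵢ(x) for units with Xᵢ = 1−x, all lying in [y_min, y_max] and satisfying the K-approximate mean balance constraint, such that (1/N)∑ᵢ Yᵢ(x) = θ. That is, [LB_K(x), UB_K(x)] is exactly the identified set for the population mean of Y(x). -/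
open Finset

/-- sharpness.  Every value `θ` in `[LB_K(x), UB_K(x)]` is attained by some
completion of the unobserved potential outcomes that respects the bounds and the
`K`-approximate mean balance constraint.  Here `Yobs` records the observed outcomes of the
group with `X i = b`. -/
theorem statement1
    (N N₁ : ℕ) (hN : 2 ≤ N)
    (ymin ymax : ℝ) (hy : ymin < ymax)
    (Yobs : Fin N → ℝ)
    (X : Fin N → Bool)
    (hN₁ : (grp N X true).card = N₁) (hN₁pos : 0 < N₁) (hN₁lt : N₁ < N)
    (b : Bool)
    (hbdd : ∀ i, X i = b → Yobs i ∈ Set.Icc ymin ymax)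
    (K : ℝ) (hK : 0 ≤ K)
    (θ : ℝ)
    (hθ : θ ∈ Set.Icc
      (gmean N X b Yobs * ((grp N X b).card : ℝ) / N
        + max ymin (gmean N X b Yobs - K) * ((grp N X (!b)).card : ℝ) / N)
      (gmean N X b Yobs * ((grp N X b).card : ℝ) / N
        + min ymax (gmean N X b Yobs + K) * ((grp N X (!b)).card : ℝ) / N)) :
    ∃ Y' : Fin N → ℝ,
      (∀ i, X i = b → Y' i = Yobs i) ∧
      (∀ i, Y' i ∈ Set.Icc ymin ymax) ∧
      |gmean N X true Y' - gmean N X false Y'| ≤ K ∧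
      (∑ i, Y' i) / N = θ := by
  classical
  set nb := (grp N X b).card with hnb_def
  set nn := (grp N X (!b)).card with hnn_def
  have hgrpnot : grp N X (!b) = Finset.univ.filter (fun i => ¬ X i = b) := by
    ext i; simp [grp]; cases hx : X i <;> cases b <;> simp
  have hcardsum : nb + nn = N := by
    rw [hnb_def, hnn_def, hgrpnot, grp,
      Finset.card_filter_add_card_filter_not, Finset.card_univ, Fintype.card_fin]
  have hnbpos : 0 < nb := by
    cases b with
    | true => have h : nb = N₁ := hnb_def.trans hN₁; omega
    | false =>
        have h : nn = N₁ := by rw [hnn_def, Bool.not_false, hN₁]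
        omega
  have hnnpos : 0 < nn := by
    cases b with
    | true => have h : nb = N₁ := hnb_def.trans hN₁; omega
    | false =>
        have h : nn = N₁ := by rw [hnn_def, Bool.not_false, hN₁]
        omega
  have hNpos : (0:ℝ) < N := by positivity
  have hnbR : (0:ℝ) < nb := by exact_mod_cast hnbpos
  have hnnR : (0:ℝ) < nn := by exact_mod_cast hnnpos
  set m := gmean N X b Yobs with hm_def
  have hmsum : m * nb = ∑ i ∈ grp N X b, Yobs i := by
    rw [hm_def, gmean, ← hnb_def]; field_simp
  set c := (θ * N - m * nb) / nn with hc_def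
  obtain ⟨hθ1, hθ2⟩ := hθ
  set L := max ymin (m - K) with hL_def
  set U := min ymax (m + K) with hU_def
  have hθ1' : m * nb + L * nn ≤ θ * N := by
    have := mul_le_mul_of_nonneg_right hθ1 hNpos.le
    rw [add_mul, div_mul_cancel₀ _ hNpos.ne', div_mul_cancel₀ _ hNpos.ne'] at this
    exact this
  have hθ2' : θ * N ≤ m * nb + U * nn := by
    have := mul_le_mul_of_nonneg_right hθ2 hNpos.le
    rw [add_mul, div_mul_cancel₀ _ hNpos.ne', div_mul_cancel₀ _ hNpos.ne'] at this
    exact this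
  have hcL : L ≤ c := by
    rw [hc_def, le_div_iff₀ hnnR]; linarith
  have hcU : c ≤ U := by
    rw [hc_def, div_le_iff₀ hnnR]; linarith
  have hcmin : ymin ≤ c := le_trans (le_max_left _ _) hcL
  have hcmax : c ≤ ymax := le_trans hcU (min_le_left _ _)
  have hcmK : m - K ≤ c := le_trans (le_max_right _ _) hcL
  have hcpK : c ≤ m + K := le_trans hcU (min_le_right _ _)
  refine ⟨fun i => if X i = b then Yobs i else c, fun i hi => by simp [hi], ?_, ?_, ?_⟩
  · intro i
    by_cases hi : X i = b
    · simpa [hi] using hbdd i hi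
    · simp only [if_neg hi]; exact ⟨hcmin, hcmax⟩
  · have hgb : gmean N X b (fun i => if X i = b then Yobs i else c) = m := by
      rw [gmean, hm_def, gmean]
      congr 1
      refine Finset.sum_congr rfl (fun i hi => ?_)
      simp only [grp, Finset.mem_filter, Finset.mem_univ, true_and] at hi
      rw [if_pos hi]
    have hgn : gmean N X (!b) (fun i => if X i = b then Yobs i else c) = c := by
      rw [gmean]
      have hs : ∑ i ∈ grp N X (!b), (if X i = b then Yobs i else c) = nn * c := by
        rw [Finset.sum_congr rfl (fun i hi => ?_), Finset.sum_const, nsmul_eq_mul]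
        rw [hgrpnot] at hi
        simp only [Finset.mem_filter, Finset.mem_univ, true_and] at hi
        rw [if_neg hi]
      rw [hs, ← hnn_def]; field_simp
    have habs : |m - c| ≤ K := abs_le.mpr ⟨by linarith, by linarith⟩
    cases b with
    | false =>
        simp only [Bool.not_false] at hgn
        rw [hgn, hgb, abs_sub_comm]
        exact habs
    | true =>
        simp only [Bool.not_true] at hgn
        rw [hgb, hgn]
        exact habs
  · have hsplit : ∑ i, (if X i = b then Yobs i else c)
        = (∑ i ∈ grp N X b, Yobs i) + nn * c := by
      rw [← Finset.sum_filter_add_sum_filter_not Finset.univ (fun i => X i = b)]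
      congr 1
      · refine Finset.sum_congr rfl (fun i hi => ?_)
        simp only [grp, Finset.mem_filter, Finset.mem_univ, true_and] at hi
        rw [if_pos hi]
      · rw [← hgrpnot]
        rw [Finset.sum_congr rfl (fun i hi => ?_), Finset.sum_const, nsmul_eq_mul]
        rw [hgrpnot] at hi
        simp only [Finset.mem_filter, Finset.mem_univ, true_and] at hi
        rw [if_neg hi]
    rw [hsplit, ← hmsum, hc_def]
    field_simp
    ring
end
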